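/- (Totality of gen on well-typed terms.) For every ground type τ and every term t with t : τ, the generalisation gen_τ(t) is defined, i.e., there exists a term obtained from t by the inductive rules defining gen_τ (for some choice of fresh variables). -/
import Mathlib


/-- First-order terms over countably infinite sets of variables (ℕ)
and function symbols (ℕ). -/
inductive Term : Type where
  | var : ℕ → Term
  | app : ℕ → List Term → Term

namespace Term

/-- Applying a substitution (a mapping from variables to terms) homomorphically. -/
def subst (θ : ℕ → Term) : Term → Term
  | var v => θ v
  | app f ts => app f (ts.attach.map (fun x => x.1.subst θ))
decreasing_by
  have := List.sizeOf_lt_of_mem x.2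
  simp only [Term.app.sizeOf_spec]
  omega

/-- A term is ground if it contains no variables. -/
inductive Ground : Term → Prop where
  | app : ∀ f ts, (∀ t ∈ ts, Ground t) → Ground (app f ts)

/-- The variable `v` occurs in the term. -/
inductive Occurs (v : ℕ) : Term → Prop where
  | var : Occurs v (var v)
  | app : ∀ f ts t, t ∈ ts → Occurs v t → Occurs v (app f ts)

/-- `s` is an instance of `t` if `s = tθ` for some substitution `θ`. -/
def IsInstanceOf (s t : Term) : Prop := ∃ θ : ℕ → Term, t.subst θ = s

/-- Two terms are variants if each is an instance of the other. -/
def Variant (s t : Term) : Prop := s.IsInstanceOf t ∧ t.IsInstanceOf s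

end Term

/-- Types: type variables, the distinguished 0-ary constructors
`static`, `dynamic`, `nonvar`, and other constructors applied to types. -/
inductive Ty : Type where
  | var : ℕ → Ty
  | static : Ty
  | dynamic : Ty
  | nonvar : Ty
  | con : ℕ → List Ty → Ty

namespace Ty

/-- Applying a type substitution. -/
def subst (σ : ℕ → Ty) : Ty → Ty
  | var v => σ v
  | static => static
  | dynamic => dynamic
  | nonvar => nonvar
  | con c args => con c (args.attach.map (fun x => x.1.subst σ))
decreasing_by
  have := List.sizeOf_lt_of_mem x.2
  simp only [Ty.con.sizeOf_spec]
  omega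

/-- A type is ground if it contains no type variables. -/
inductive Ground : Ty → Prop where
  | static : Ground static
  | dynamic : Ground dynamic
  | nonvar : Ground nonvar
  | con : ∀ c args, (∀ τ ∈ args, Ground τ) → Ground (con c args)

/-- All type variables of the type are below `n`. -/
inductive VarsBelow (n : ℕ) : Ty → Prop where
  | var : ∀ v, v < n → VarsBelow n (var v)
  | static : VarsBelow n static
  | dynamic : VarsBelow n dynamic
  | nonvar : VarsBelow n nonvar
  | con : ∀ c args, (∀ τ ∈ args, VarsBelow n τ) → VarsBelow n (con c args)

end Ty

/-- A type definition `c(V₁,…,Vₙ) → f₁(T₁¹,…) ; … ; f_k(T_k¹,…)` for an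
`n`-ary type constructor: the variables are represented by `0,…,arity-1`,
the alternatives are pairs of a function symbol and the list of argument types;
the function symbols are distinct and the argument types only use
variables among `0,…,arity-1`. -/
structure TypeDef where
  arity : ℕ
  alts : List (ℕ × List Ty)
  alts_nonempty : alts ≠ []
  alts_nodup : (alts.map Prod.fst).Nodup
  vars_bound : ∀ p ∈ alts, ∀ τ ∈ p.2, Ty.VarsBelow arity τ

/-- A type system: exactly one type definition for every type constructor
other than `static`, `dynamic` and `nonvar`. -/
structure TypeSystem where
  defs : ℕ → TypeDef

mutual
/-- The type judgement `t : τ` relative to the type system `Γ`. -/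
inductive HasType (Γ : TypeSystem) : Term → Ty → Prop where
  | dyn (t : Term) : HasType Γ t .dynamic
  | stat (t : Term) : t.Ground → HasType Γ t .static
  | nv (f : ℕ) (ts : List Term) : HasType Γ (.app f ts) .nonvar
  | con (c : ℕ) (σ : ℕ → Ty) (f : ℕ) (Ts : List Ty) (ts : List Term)
      (hσ : ∀ v, (σ v).Ground)
      (hmem : (f, Ts) ∈ (Γ.defs c).alts)
      (hargs : HasTypeArgs Γ ts (Ts.map (Ty.subst σ))) :
      HasType Γ (.app f ts) (.con c ((List.range (Γ.defs c).arity).map σ))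

/-- `HasTypeArgs Γ ts τs` : the terms `ts` pointwise have the types `τs`. -/
inductive HasTypeArgs (Γ : TypeSystem) : List Term → List Ty → Prop where
  | nil : HasTypeArgs Γ [] []
  | cons {t τ ts τs} : HasType Γ t τ → HasTypeArgs Γ ts τs →
      HasTypeArgs Γ (t :: ts) (τ :: τs)
end

/-- Atoms `p(t₁,…,tₙ)` over a countably infinite set of predicate symbols (ℕ). -/
structure Atom where
  pred : ℕ
  args : List Term

namespace Atom

/-- Substitutions apply to atoms argumentwise. -/
def subst (θ : ℕ → Term) (A : Atom) : Atom := ⟨A.pred, A.args.map (Term.subst θ)⟩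

/-- `B` is an instance of `A`. -/
def IsInstanceOf (B A : Atom) : Prop := ∃ θ : ℕ → Term, A.subst θ = B

/-- Two atoms are variants if each is an instance of the other. -/
def Variant (A B : Atom) : Prop := A.IsInstanceOf B ∧ B.IsInstanceOf A

end Atom

/-- A division: a set of expressions `p(τ₁,…,τₙ)` (represented as pairs of a
predicate symbol and a list of types), with all types ground and at most one
division per predicate. -/
def IsDivision (Δ : Set (ℕ × List Ty)) : Prop :=
  (∀ d ∈ Δ, ∀ τ ∈ d.2, τ.Ground) ∧
  (∀ d ∈ Δ, ∀ d' ∈ Δ, d.1 = d'.1 → d = d')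

/-- An atom `p(t₁,…,tₙ)` is safe wrt `Δ` iff there is `p(τ₁,…,τₙ) ∈ Δ`
with `tᵢ : τᵢ` for all `i`. -/
def SafeAtom (Γ : TypeSystem) (Δ : Set (ℕ × List Ty)) (A : Atom) : Prop :=
  ∃ τs : List Ty, (A.pred, τs) ∈ Δ ∧ HasTypeArgs Γ A.args τs

mutual
/-- `Gen Γ τ t s L`: `s` is a result of the partial generalisation mapping
`gen_τ(t)`, where `L` records (in order) the fresh variables chosen. -/
inductive Gen (Γ : TypeSystem) : Ty → Term → Term → List ℕ → Prop where
  | static (t : Term) : Gen Γ .static t t []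
  | dynamic (t : Term) (v : ℕ) : Gen Γ .dynamic t (.var v) [v]
  | nonvar (f : ℕ) (ts : List Term) (vs : List ℕ) (h : vs.length = ts.length) :
      Gen Γ .nonvar (.app f ts) (.app f (vs.map Term.var)) vs
  | con (c : ℕ) (σ : ℕ → Ty) (f : ℕ) (Ts : List Ty) (ts ss : List Term) (L : List ℕ)
      (hσ : ∀ v, (σ v).Ground)
      (hmem : (f, Ts) ∈ (Γ.defs c).alts)
      (hargs : GenArgs Γ (Ts.map (Ty.subst σ)) ts ss L) :
      Gen Γ (.con c ((List.range (Γ.defs c).arity).map σ)) (.app f ts) (.app f ss) L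

/-- Pointwise generalisation of a list of terms, collecting the fresh variables. -/
inductive GenArgs (Γ : TypeSystem) : List Ty → List Term → List Term → List ℕ → Prop where
  | nil : GenArgs Γ [] [] [] []
  | cons {τ t s L τs ts ss Ls} : Gen Γ τ t s L → GenArgs Γ τs ts ss Ls →
      GenArgs Γ (τ :: τs) (t :: ts) (s :: ss) (L ++ Ls)
end

/-- `GenAtom Γ Δ A B L`: `B` is a result of `gen_Δ(A)` with fresh variables `L`. -/
def GenAtom (Γ : TypeSystem) (Δ : Set (ℕ × List Ty)) (A B : Atom) (L : List ℕ) : Prop :=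
  B.pred = A.pred ∧
  ∃ τs : List Ty, (A.pred, τs) ∈ Δ ∧ HasTypeArgs Γ A.args τs ∧
    GenArgs Γ τs A.args B.args L


mutual
theorem gen_total_aux (Γ : TypeSystem) {t : Term} {τ : Ty} (h : HasType Γ t τ) :
    ∃ (s : Term) (L : List ℕ), Gen Γ τ t s L := by
  cases h with
  | dyn t => exact ⟨.var 0, [0], .dynamic t 0⟩
  | stat t _ => exact ⟨t, [], .static t⟩
  | nv f ts =>
      exact ⟨.app f ((ts.map (fun _ => 0)).map Term.var), ts.map (fun _ => 0),
        .nonvar f ts _ (by simp)⟩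
  | con c σ f Ts ts hσ hmem hargs =>
      obtain ⟨ss, L, hg⟩ := genArgs_total_aux Γ hargs
      exact ⟨.app f ss, L, .con c σ f Ts _ ss L hσ hmem hg⟩

theorem genArgs_total_aux (Γ : TypeSystem) {ts : List Term} {τs : List Ty}
    (h : HasTypeArgs Γ ts τs) : ∃ (ss : List Term) (L : List ℕ), GenArgs Γ τs ts ss L := by
  cases h with
  | nil => exact ⟨[], [], .nil⟩
  | cons h1 h2 =>
      obtain ⟨s, L, hg⟩ := gen_total_aux Γ h1
      obtain ⟨ss, Ls, hgs⟩ := genArgs_total_aux Γ h2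
      exact ⟨s :: ss, L ++ Ls, .cons hg hgs⟩
end

/-- **Totality of gen on well-typed terms.** For every ground type `τ` and every
term `t` with `t : τ`, the generalisation `gen_τ(t)` is defined: there exists a
term obtained from `t` by the inductive rules defining `gen_τ`
(for some choice of fresh variables). -/
theorem gen_total (Γ : TypeSystem) (τ : Ty) (t : Term) (hτ : τ.Ground)
    (h : HasType Γ t τ) : ∃ (s : Term) (L : List ℕ), Gen Γ τ t s L := by
  exact gen_total_aux Γ h
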